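/- For every integer n with n ≡ 2 (mod 4) and 6 ≤ n ≤ 202, the n-crossing permutations over S_{n+2} generate the full symmetric group: C(n, n+2) = S_{n+2}. -/

import Mathlib

/-- The underlying function of the `n`-crossing permutation `π_j` over `{1, …, m}` (as a
function on `ℕ`): it sends `j + k` to `j + n - 1 - k` for `0 ≤ k ≤ n - 1` and fixes all
other points. -/
def crossFun (n j i : ℕ) : ℕ :=
  if j ≤ i ∧ i < j + n then 2 * j + n - 1 - i else i

lemma crossFun_involutive (n j : ℕ) : Function.Involutive (crossFun n j) := by
  intro i
  unfold crossFun
  split_ifs <;> omega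

/-- The `n`-crossing permutation `π_j`, viewed as a permutation of `ℕ` fixing every point
outside `{j, …, j + n - 1}`. -/
def crossPerm (n j : ℕ) : Equiv.Perm ℕ :=
  Function.Involutive.toPerm _ (crossFun_involutive n j)

/-- `C n m` is the subgroup of the symmetric group `S_m` (realized as permutations of `ℕ`
supported on `{1, …, m}`) generated by the `n`-crossing permutations `π_1, …, π_{m-n+1}`. -/
def C (n m : ℕ) : Subgroup (Equiv.Perm ℕ) :=
  Subgroup.closure {σ | ∃ j, 1 ≤ j ∧ j ≤ m - n + 1 ∧ σ = crossPerm n j}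

/-!
Write `π_j` for the crossing permutations and `s = {1, …, n + 2}`. The element `δ = π₃ π₂` fixes
`1` and, for even `n`, permutes `s \ {1}` as the single cycle
`n+2 → 3 → 5 → ⋯ → n+1 → 2 → 4 → ⋯ → n → n+2`, while `π₃ π₂ π₁ π₂` is the 3-cycle
`(1, n+2, 3)`. Conjugating by powers of `δ` gives the 3-cycles `(1, u, δ u)` along this cycle,
and multiplying them gives every `(1, n+2, z)`, hence every 3-cycle of `s`. Products of two
3-cycles give all double transpositions; since `n - 2 ≡ 0 (mod 4)` the reversal of `{2, …, n-1}`
is a product of such, so `π₁` yields the transposition `(1 n)`, and with the double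
transpositions every transposition of `s`.
-/

open Equiv MulAction

section ThreeCycle

variable {α : Type*} [DecidableEq α]

/-- The 3-cycle `a ↦ b ↦ c ↦ a` (for distinct `a`, `b`, `c`). -/
def threeCycle (a b c : α) : Perm α := swap a b * swap b c

theorem conj_threeCycle (g : Perm α) (a b c : α) :
    g * threeCycle a b c * g⁻¹ = threeCycle (g a) (g b) (g c) := by
  simp only [threeCycle, swap_apply_apply]
  group

theorem threeCycle_rotate {a b c : α} (hab : a ≠ b) (hbc : b ≠ c) (hac : a ≠ c) :
    threeCycle a b c = threeCycle b c a := by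
  ext i
  simp only [threeCycle, Perm.mul_apply, swap_apply_def]
  split_ifs <;> grind

theorem threeCycle_inv {a b c : α} (hab : a ≠ b) (hbc : b ≠ c) (hac : a ≠ c) :
    (threeCycle a b c)⁻¹ = threeCycle a c b := by
  rw [inv_eq_iff_mul_eq_one]
  ext i
  simp only [threeCycle, Perm.mul_apply, swap_apply_def, Perm.one_apply]
  split_ifs <;> grind

theorem threeCycle_mul_threeCycle_of_pivot {x a b c : α} (ha : a ≠ x) (hb : b ≠ x) (hc : c ≠ x)
    (hab : a ≠ b) (hbc : b ≠ c) (hac : a ≠ c) :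
    threeCycle x b c * threeCycle x a b = threeCycle x a c := by
  ext i
  simp only [threeCycle, Perm.mul_apply, swap_apply_def]
  split_ifs <;> grind

theorem threeCycle_mul_threeCycle {x a b c : α} (ha : a ≠ x) (hb : b ≠ x) (hc : c ≠ x)
    (hab : a ≠ b) (hbc : b ≠ c) (hac : a ≠ c) :
    threeCycle x a b * threeCycle x b c = threeCycle a b c := by
  ext i
  simp only [threeCycle, Perm.mul_apply, swap_apply_def]
  split_ifs <;> grind

theorem swap_mul_swap_eq_threeCycle_mul {a b c d : α} (hab : a ≠ b) (hac : a ≠ c) (had : a ≠ d)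
    (hbc : b ≠ c) (hbd : b ≠ d) (hcd : c ≠ d) :
    swap a b * swap c d = threeCycle a c b * threeCycle a c d := by
  ext i
  simp only [threeCycle, Perm.mul_apply, swap_apply_def]
  split_ifs <;> grind

end ThreeCycle

section Generation

variable {α : Type*} [DecidableEq α] {H : Subgroup (Perm α)}

theorem threeCycle_orbit_succ_mem {g : Perm α} (hg : g ∈ H) {x : α} (hx : g x = x)
    {u : ℕ → α} {N : ℕ} (hu : ∀ k < N, u (k + 1) = g (u k))
    (h0 : threeCycle x (u 0) (u 1) ∈ H) : ∀ k < N, threeCycle x (u k) (u (k + 1)) ∈ H := by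
  intro k
  induction k with
  | zero => exact fun _ ↦ h0
  | succ k ih =>
    intro hk
    have hconj := conj_threeCycle g x (u k) (u (k + 1))
    rw [hx, ← hu k (by omega), ← hu (k + 1) hk] at hconj
    rw [← hconj]
    exact mul_mem (mul_mem hg (ih (by omega))) (inv_mem hg)

theorem threeCycle_orbit_mem {g : Perm α} (hg : g ∈ H) {x : α} (hx : g x = x)
    {u : ℕ → α} {N : ℕ} (hu : ∀ k < N, u (k + 1) = g (u k))
    (h0 : threeCycle x (u 0) (u 1) ∈ H) (hinj : Set.InjOn u (Set.Iic N))
    (hux : ∀ k ≤ N, u k ≠ x) : ∀ k, 1 ≤ k → k ≤ N → threeCycle x (u 0) (u k) ∈ H := by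
  have hne {i j : ℕ} (hi : i ≤ N) (hj : j ≤ N) (hij : i ≠ j) : u i ≠ u j :=
    hinj.ne (Set.mem_Iic.2 hi) (Set.mem_Iic.2 hj) hij
  intro k hk1 hkN
  induction k, hk1 using Nat.le_induction with
  | base => exact h0
  | succ k hk1 ih =>
    rw [← threeCycle_mul_threeCycle_of_pivot (hux 0 (by omega)) (hux k (by omega))
      (hux (k + 1) hkN) (hne (by omega) (by omega) (by omega)) (hne (by omega) hkN (by omega))
      (hne (by omega) hkN (by omega))]
    exact mul_mem (threeCycle_orbit_succ_mem hg hx hu h0 k (by omega)) (ih (by omega))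

theorem threeCycle_mem_of_pivot {s : Finset α} {x y : α} (hxy : x ≠ y)
    (h : ∀ z ∈ s, z ≠ x → z ≠ y → threeCycle x y z ∈ H) :
    ∀ a ∈ s, ∀ b ∈ s, ∀ c ∈ s, a ≠ b → b ≠ c → a ≠ c → threeCycle a b c ∈ H := by
  have hx' : ∀ a ∈ s, ∀ b ∈ s, a ≠ x → b ≠ x → a ≠ b → threeCycle x a b ∈ H := by
    intro a ha b hb hax hbx hab
    by_cases hay : a = y
    · subst hay
      exact h b hb hbx (Ne.symm hab)
    by_cases hby : b = y
    · subst hby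
      rw [← threeCycle_inv (Ne.symm hbx) (Ne.symm hab) (Ne.symm hax)]
      exact inv_mem (h a ha hax hay)
    rw [← threeCycle_mul_threeCycle_of_pivot hax (Ne.symm hxy) hbx hay (Ne.symm hby) hab,
      ← threeCycle_inv hxy (Ne.symm hay) (Ne.symm hax)]
    exact mul_mem (h b hb hbx hby) (inv_mem (h a ha hax hay))
  intro a ha b hb c hc hab hbc hac
  by_cases hax : a = x
  · subst hax
    exact hx' b hb c hc (Ne.symm hab) (Ne.symm hac) hbc
  by_cases hbx : b = x
  · subst hbx
    rw [threeCycle_rotate hab hbc hac]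
    exact hx' c hc a ha (Ne.symm hbc) hax (Ne.symm hac)
  by_cases hcx : c = x
  · subst hcx
    rw [← threeCycle_rotate (Ne.symm hac) hab (Ne.symm hbc)]
    exact hx' a ha b hb hax hbx hab
  rw [← threeCycle_mul_threeCycle hax hbx hcx hab hbc hac]
  exact mul_mem (hx' a ha b hb hax hbx hab) (hx' b hb c hc hbx hcx hbc)

theorem swap_mul_swap_mem {s : Finset α}
    (h3 : ∀ a ∈ s, ∀ b ∈ s, ∀ c ∈ s, a ≠ b → b ≠ c → a ≠ c → threeCycle a b c ∈ H)
    {a b c d : α} (ha : a ∈ s) (hb : b ∈ s) (hc : c ∈ s) (hd : d ∈ s) (hab : a ≠ b)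
    (hac : a ≠ c) (had : a ≠ d) (hbc : b ≠ c) (hbd : b ≠ d) (hcd : c ≠ d) :
    swap a b * swap c d ∈ H := by
  rw [swap_mul_swap_eq_threeCycle_mul hab hac had hbc hbd hcd]
  exact mul_mem (h3 a ha c hc b hb hac (Ne.symm hbc) hab) (h3 a ha c hc d hd hac hcd had)

theorem swap_mem_of_threeCycle_mem {s : Finset α} (hs : 6 ≤ s.card)
    (h3 : ∀ a ∈ s, ∀ b ∈ s, ∀ c ∈ s, a ≠ b → b ≠ c → a ≠ c → threeCycle a b c ∈ H)
    {p q : α} (hp : p ∈ s) (hq : q ∈ s) (hpq : p ≠ q) (hswap : swap p q ∈ H)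
    {a b : α} (ha : a ∈ s) (hb : b ∈ s) : swap a b ∈ H := by
  by_cases hab : a = b
  · rw [hab, swap_self]
    exact one_mem H
  have hcard : 1 < (s \ {a, b, p, q}).card := by
    have := Finset.le_card_sdiff {a, b, p, q} s
    have := Finset.card_le_four (a := a) (b := b) (c := p) (d := q)
    omega
  obtain ⟨c, hc, d, hd, hcd⟩ := Finset.one_lt_card.1 hcard
  simp only [Finset.mem_sdiff, Finset.mem_insert, Finset.mem_singleton, not_or] at hc hd
  obtain ⟨hc, hca, hcb, hcp, hcq⟩ := hc
  obtain ⟨hd, hda, hdb, hdp, hdq⟩ := hd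
  have hsplit : swap a b = swap a b * swap c d * (swap c d * swap p q) * swap p q := by
    simp only [mul_assoc, swap_mul_self_mul, swap_mul_self, mul_one]
  rw [hsplit]
  refine mul_mem (mul_mem ?_ ?_) hswap
  · exact swap_mul_swap_mem h3 ha hb hc hd hab (Ne.symm hca) (Ne.symm hda) (Ne.symm hcb)
      (Ne.symm hdb) hcd
  · exact swap_mul_swap_mem h3 hc hd hp hq hcd hcp hcq hdp hdq hpq

theorem fixingSubgroup_le_of_swap_mem {s : Finset α} (h : ∀ a ∈ s, ∀ b ∈ s, swap a b ∈ H) :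
    fixingSubgroup (Perm α) (↑s : Set α)ᶜ ≤ H := by
  intro σ hσ
  have hfix : ∀ x ∉ s, σ x = x := fun x hx ↦ (mem_fixingSubgroup_iff (Perm α)).1 hσ x hx
  have hmem : ∀ x, σ x ≠ x → x ∈ s := fun x hx ↦ by_contra fun hxs ↦ hx (hfix x hxs)
  let S : Set (Perm α) := {τ | ∃ a ∈ s, ∃ b ∈ s, a ≠ b ∧ τ = swap a b}
  have hS : Subgroup.closure S ≤ H := by
    rw [Subgroup.closure_le]
    rintro _ ⟨a, ha, b, hb, -, rfl⟩
    exact h a ha b hb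
  refine hS ((mem_closure_isSwap ?_).2 ⟨?_, fun x ↦ ?_⟩)
  · rintro _ ⟨a, -, b, -, hab, rfl⟩
    exact ⟨a, b, hab, rfl⟩
  · exact s.finite_toSet.subset fun x hx ↦ hmem x hx
  · by_cases hx : σ x = x
    · rw [hx]
      exact mem_orbit_self x
    have hσx : σ (σ x) ≠ σ x := fun h ↦ hx (σ.injective h)
    exact ⟨⟨swap x (σ x), Subgroup.subset_closure
      ⟨x, hmem x hx, σ x, hmem _ hσx, Ne.symm hx, rfl⟩⟩, swap_apply_left x (σ x)⟩

end Generation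

section Crossing

theorem crossPerm_apply (n j i : ℕ) :
    crossPerm n j i = if j ≤ i ∧ i < j + n then 2 * j + n - 1 - i else i := rfl

theorem crossPerm_mul_self (n j : ℕ) : crossPerm n j * crossPerm n j = 1 :=
  Equiv.ext (crossFun_involutive n j)

theorem crossPerm_zero (j : ℕ) : crossPerm 0 j = 1 := by
  ext i
  simp only [crossPerm_apply, Perm.one_apply]
  split_ifs <;> omega

theorem crossPerm_add_two (m j : ℕ) :
    crossPerm (m + 2) j = swap j (j + m + 1) * crossPerm m (j + 1) := by
  ext i
  simp only [Perm.mul_apply, crossPerm_apply, swap_apply_def]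
  split_ifs <;> omega

theorem crossPerm_mem_C {n m j : ℕ} (hj : 1 ≤ j) (hjm : j ≤ m - n + 1) : crossPerm n j ∈ C n m :=
  Subgroup.subset_closure ⟨j, hj, hjm, rfl⟩

theorem C_le_fixingSubgroup {n m : ℕ} (hnm : n ≤ m) :
    C n m ≤ fixingSubgroup (Perm ℕ) (↑(Finset.Icc 1 m) : Set ℕ)ᶜ := by
  rw [C, Subgroup.closure_le]
  rintro _ ⟨j, hj, hjm, rfl⟩
  rw [SetLike.mem_coe, mem_fixingSubgroup_iff]
  intro i hi
  simp only [Set.mem_compl_iff, Finset.coe_Icc, Set.mem_Icc] at hi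
  rw [Perm.smul_def, crossPerm_apply, if_neg (by omega)]

theorem crossPerm_four_mul_mem {H : Subgroup (Perm ℕ)} {s : Finset ℕ}
    (h3 : ∀ a ∈ s, ∀ b ∈ s, ∀ c ∈ s, a ≠ b → b ≠ c → a ≠ c → threeCycle a b c ∈ H) (k : ℕ) :
    ∀ j, (∀ i, j ≤ i → i < j + 4 * k → i ∈ s) → crossPerm (4 * k) j ∈ H := by
  induction k with
  | zero =>
    intro j _
    rw [Nat.mul_zero, crossPerm_zero]
    exact one_mem H
  | succ k ih =>
    intro j hs
    rw [show 4 * (k + 1) = 4 * k + 2 + 2 by ring, crossPerm_add_two, crossPerm_add_two, ← mul_assoc]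
    refine mul_mem ?_ (ih (j + 2) fun i hi hi' ↦ hs i (by omega) (by omega))
    exact swap_mul_swap_mem h3 (hs _ le_rfl (by omega)) (hs _ (by omega) (by omega))
      (hs _ (by omega) (by omega)) (hs _ (by omega) (by omega)) (by omega) (by omega) (by omega)
      (by omega) (by omega) (by omega)

/-- The cycle of `π₃ π₂` through `n + 2`, listed from `n + 2`: first the odd points `3, 5, …, n+1`,
then the even points `2, 4, …, n`. -/
def crossOrbit (n k : ℕ) : ℕ :=
  if k = 0 then n + 2 else if k ≤ n / 2 then 2 * k + 1 else 2 * k - n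

theorem crossOrbit_succ {n : ℕ} (hn : Even n) {k : ℕ} (hk : k < n) :
    crossOrbit n (k + 1) = (crossPerm n 3 * crossPerm n 2) (crossOrbit n k) := by
  rw [Nat.even_iff] at hn
  simp only [crossOrbit, Nat.add_one_ne_zero, ↓reduceIte, Perm.mul_apply, crossPerm_apply]
  split_ifs <;> omega

theorem crossOrbit_injOn {n : ℕ} (hn : Even n) : Set.InjOn (crossOrbit n) (Set.Iic n) := by
  intro i hi j hj
  rw [Nat.even_iff] at hn
  simp only [crossOrbit, Set.mem_Iic] at *
  split_ifs <;> omega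

theorem crossOrbit_ne_one {n : ℕ} (hn : Even n) (k : ℕ) : crossOrbit n k ≠ 1 := by
  rw [Nat.even_iff] at hn
  simp only [crossOrbit]
  split_ifs <;> omega

theorem exists_crossOrbit_eq {n : ℕ} (hn : Even n) {y : ℕ} (hy2 : 2 ≤ y) (hy : y ≤ n + 1) :
    ∃ k, 1 ≤ k ∧ k ≤ n ∧ crossOrbit n k = y := by
  rw [Nat.even_iff] at hn
  rcases Nat.even_or_odd' y with ⟨m, rfl | rfl⟩
  · refine ⟨m + n / 2, by omega, by omega, ?_⟩
    simp only [crossOrbit]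
    split_ifs <;> omega
  · refine ⟨m, by omega, by omega, ?_⟩
    simp only [crossOrbit]
    split_ifs <;> omega

theorem crossPerm_three_two_apply_one (n : ℕ) : (crossPerm n 3 * crossPerm n 2) 1 = 1 := by
  simp only [Perm.mul_apply, crossPerm_apply]
  split_ifs <;> omega

theorem crossPerm_three_two_one_two {n : ℕ} (hn : 3 ≤ n) :
    crossPerm n 3 * crossPerm n 2 * crossPerm n 1 * crossPerm n 2 = threeCycle 1 (n + 2) 3 := by
  ext i
  simp only [threeCycle, Perm.mul_apply, crossPerm_apply, swap_apply_def]
  split_ifs <;> omega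

theorem threeCycle_mem_C {n : ℕ} (hn : Even n) (hn3 : 3 ≤ n) :
    ∀ a ∈ Finset.Icc 1 (n + 2), ∀ b ∈ Finset.Icc 1 (n + 2), ∀ c ∈ Finset.Icc 1 (n + 2),
      a ≠ b → b ≠ c → a ≠ c → threeCycle a b c ∈ C n (n + 2) := by
  have hgen {j : ℕ} (hj : 1 ≤ j) (hj3 : j ≤ 3) : crossPerm n j ∈ C n (n + 2) :=
    crossPerm_mem_C hj (by omega)
  have hδ : crossPerm n 3 * crossPerm n 2 ∈ C n (n + 2) := mul_mem (hgen (by omega) le_rfl)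
    (hgen (by omega) (by omega))
  have hbase : threeCycle 1 (crossOrbit n 0) (crossOrbit n 1) ∈ C n (n + 2) := by
    have h1 : crossOrbit n 1 = 3 := by
      simp only [crossOrbit, one_ne_zero, ↓reduceIte]
      split_ifs <;> omega
    rw [show crossOrbit n 0 = n + 2 from rfl, h1, ← crossPerm_three_two_one_two hn3]
    exact mul_mem (mul_mem hδ (hgen le_rfl (by omega))) (hgen (by omega) (by omega))
  refine threeCycle_mem_of_pivot (x := 1) (y := n + 2) (by omega) fun z hz hz1 hzn ↦ ?_
  rw [Finset.mem_Icc] at hz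
  obtain ⟨k, hk1, hkn, rfl⟩ := exists_crossOrbit_eq hn (by omega) (by omega : z ≤ n + 1)
  exact threeCycle_orbit_mem hδ (crossPerm_three_two_apply_one n)
    (fun k hk ↦ crossOrbit_succ hn hk) hbase (crossOrbit_injOn hn)
    (fun k _ ↦ crossOrbit_ne_one hn k) k hk1 hkn

theorem swap_one_mem_C {n : ℕ} (hn : n % 4 = 2) (hn3 : 3 ≤ n) : swap 1 n ∈ C n (n + 2) := by
  obtain ⟨k, hk⟩ : ∃ k, n = 4 * k + 2 := ⟨n / 4, by omega⟩
  have hrev : crossPerm (4 * k) 2 ∈ C n (n + 2) :=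
    crossPerm_four_mul_mem (threeCycle_mem_C (Nat.even_iff.2 (by omega)) hn3) k 2
      fun i hi hi' ↦ Finset.mem_Icc.2 ⟨by omega, by omega⟩
  have hπ : crossPerm n 1 = swap 1 n * crossPerm (4 * k) 2 := by
    rw [hk, crossPerm_add_two]
    ring_nf
  rw [← mul_one (swap 1 n), ← crossPerm_mul_self (4 * k) 2, ← mul_assoc, ← hπ]
  exact mul_mem (crossPerm_mem_C le_rfl (by omega)) hrev

end Crossing

theorem stmt15_general (n : ℕ) (hn : n % 4 = 2) (hn6 : 6 ≤ n) :
    ∀ σ : Equiv.Perm ℕ, σ ∈ C n (n + 2) ↔ (∀ i, σ i ≠ i → 1 ≤ i ∧ i ≤ n + 2) := by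
  have h3 := threeCycle_mem_C (Nat.even_iff.2 (by omega)) (by omega : 3 ≤ n)
  have hswap : ∀ a ∈ Finset.Icc 1 (n + 2), ∀ b ∈ Finset.Icc 1 (n + 2), swap a b ∈ C n (n + 2) :=
    fun a ha b hb ↦ swap_mem_of_threeCycle_mem (by rw [Nat.card_Icc]; omega) h3
      (Finset.mem_Icc.2 ⟨le_rfl, by omega⟩) (Finset.mem_Icc.2 ⟨by omega, by omega⟩) (by omega)
      (swap_one_mem_C hn (by omega)) ha hb
  have hC : C n (n + 2) = fixingSubgroup (Perm ℕ) (↑(Finset.Icc 1 (n + 2)) : Set ℕ)ᶜ :=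
    le_antisymm (C_le_fixingSubgroup (by omega)) (fixingSubgroup_le_of_swap_mem hswap)
  intro σ
  rw [hC, mem_fixingSubgroup_iff]
  simp only [Set.mem_compl_iff, Finset.coe_Icc, Set.mem_Icc, Perm.smul_def]
  exact forall_congr' fun i ↦ not_imp_comm

theorem stmt15 (n : ℕ) (hn : n % 4 = 2) (hn6 : 6 ≤ n) (hn202 : n ≤ 202) :
    ∀ σ : Equiv.Perm ℕ, σ ∈ C n (n + 2) ↔ (∀ i, σ i ≠ i → 1 ≤ i ∧ i ≤ n + 2) :=
  stmt15_general n hn hn6
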